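/- For every ℓ̌ > 0, the asymptotic losses of the identity shrinkage rule (i.e., with ϑ = λ̌(ℓ̌)) are: Ľ_F(ℓ̌, λ̌(ℓ̌)) = √(2 + 3/ℓ̌²) if ℓ̌ ≥ 1 and √(ℓ̌² + 4) if 0 < ℓ̌ < 1; Ľ_O(ℓ̌, λ̌(ℓ̌)) = (1 + √(5 + 4ℓ̌²))/(2ℓ̌) if ℓ̌ ≥ 1 and 2 if 0 < ℓ̌ < 1; Ľ_N(ℓ̌, λ̌(ℓ̌)) = √(4 + 5/ℓ̌²) if ℓ̌ ≥ 1 and ℓ̌ + 2 if 0 < ℓ̌ < 1. -/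

import Mathlib

/-- The 2×2 pivot matrix M(ℓ,ϑ,c,s) = A − B with A = diag(ℓ,0), B = ϑ·[[c²,cs],[cs,s²]]. -/
noncomputable def pivotM (l θ c s : ℝ) : Matrix (Fin 2) (Fin 2) ℝ :=
  !![l - θ * c ^ 2, -(θ * c * s); -(θ * c * s), -(θ * s ^ 2)]

/-- Frobenius norm: square root of the sum of squares of the entries. -/
noncomputable def frobNorm (A : Matrix (Fin 2) (Fin 2) ℝ) : ℝ :=
  Real.sqrt (∑ i, ∑ j, (A i j) ^ 2)

/-- Operator norm: the ℓ²→ℓ² operator norm, i.e. the largest singular value. -/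
noncomputable def opNorm (A : Matrix (Fin 2) (Fin 2) ℝ) : ℝ :=
  ‖LinearMap.toContinuousLinearMap (Matrix.toEuclideanLin A)‖

/-- Nuclear norm: the trace of √(AᴴA), i.e. the sum of the singular values. -/
noncomputable def nucNorm (A : Matrix (Fin 2) (Fin 2) ℝ) : ℝ :=
  let hA := (Matrix.posSemidef_conjTranspose_mul_self A).1
  (hA.eigenvectorUnitary.1 * Matrix.diagonal (Real.sqrt ∘ hA.eigenvalues) *
    (star hA.eigenvectorUnitary : Matrix (Fin 2) (Fin 2) ℝ)).trace

/-- Limiting cosine č(ℓ̌) in the γ → 0 disproportional framework. -/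
noncomputable def cCheck (l : ℝ) : ℝ := if 1 < l then Real.sqrt (1 - 1 / l ^ 2) else 0

/-- Limiting sine š(ℓ̌) = √(1 − č(ℓ̌)²). -/
noncomputable def sCheck (l : ℝ) : ℝ := Real.sqrt (1 - cCheck l ^ 2)

/-- Eigenvalue mapping λ̌(ℓ̌) in the γ → 0 disproportional framework. -/
noncomputable def lamCheck (l : ℝ) : ℝ := if 1 < l then l + 1 / l else 2

/-- Asymptotic Frobenius loss Ľ_F(ℓ̌, ϑ). -/
noncomputable def lossCheckF (l θ : ℝ) : ℝ := frobNorm (pivotM l θ (cCheck l) (sCheck l))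

/-- Asymptotic operator-norm loss Ľ_O(ℓ̌, ϑ). -/
noncomputable def lossCheckO (l θ : ℝ) : ℝ := opNorm (pivotM l θ (cCheck l) (sCheck l))

/-- Asymptotic nuclear-norm loss Ľ_N(ℓ̌, ϑ). -/
noncomputable def lossCheckN (l θ : ℝ) : ℝ := nucNorm (pivotM l θ (cCheck l) (sCheck l))

open scoped Matrix

lemma frob2 (a b d : ℝ) : frobNorm !![a,b;b,d] = Real.sqrt (a^2+2*b^2+d^2) := by
  simp [frobNorm, Fin.sum_univ_two]
  ring_nf

lemma psd2 (p q r : ℝ) (hp : 0 ≤ p) (hr : 0 ≤ r) (hq : q^2 ≤ p*r) :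
    Matrix.PosSemidef !![p,q;q,r] := by
  refine Matrix.PosSemidef.of_dotProduct_mulVec_nonneg ?_ ?_
  · ext i j
    fin_cases i <;> fin_cases j <;> simp [Matrix.conjTranspose_apply]
  · intro x
    simp [dotProduct, Matrix.mulVec, Fin.sum_univ_two]
    rcases eq_or_lt_of_le hp with h | h
    · have hq0 : q = 0 := by nlinarith [sq_nonneg q]
      subst hq0
      nlinarith [sq_nonneg (x 1), sq_nonneg (x 0)]
    · nlinarith [sq_nonneg (p * x 0 + q * x 1), sq_nonneg (x 1), mul_nonneg hp hr]

lemma nuc2 (a b d p q r : ℝ) (hS : Matrix.PosSemidef !![p,q;q,r])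
    (hsq : !![p,q;q,r] ^ 2 = (!![a,b;b,d])ᴴ * !![a,b;b,d]) :
    nucNorm !![a,b;b,d] = p + r := by
  have hB := Matrix.posSemidef_conjTranspose_mul_self !![a,b;b,d]
  have htr := hB.1.trace_eq_sum_eigenvalues
  have hdt := hB.1.det_eq_prod_eigenvalues
  have e0 := hB.eigenvalues_nonneg 0
  have e1 := hB.eigenvalues_nonneg 1
  have hp : 0 ≤ p := by simpa using hS.diag_nonneg (i := 0)
  have hr : 0 ≤ r := by simpa using hS.diag_nonneg (i := 1)
  have hd : 0 ≤ p * r - q * q := by simpa [Matrix.det_fin_two_of] using hS.det_nonneg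
  have T : p * p + q * q + (q * q + r * r) = hB.1.eigenvalues 0 + hB.1.eigenvalues 1 := by
    have h : (!![p,q;q,r] ^ 2).trace = hB.1.eigenvalues 0 + hB.1.eigenvalues 1 := by
      rw [hsq, htr]; simp [Fin.sum_univ_two]
    rw [← h]; simp [pow_two, Matrix.trace_fin_two, Matrix.mul_apply, Fin.sum_univ_two]
  have D : (p * p + q * q) * (q * q + r * r) - (p * q + q * r) * (q * p + r * q)
      = hB.1.eigenvalues 0 * hB.1.eigenvalues 1 := by
    have h : (!![p,q;q,r] ^ 2).det = hB.1.eigenvalues 0 * hB.1.eigenvalues 1 := by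
      rw [hsq, hdt]; simp [Fin.prod_univ_two]
    rw [← h]; simp [pow_two, Matrix.det_fin_two, Matrix.mul_apply, Fin.sum_univ_two]
  have hN : nucNorm !![a,b;b,d] = Real.sqrt (hB.1.eigenvalues 0) + Real.sqrt (hB.1.eigenvalues 1) := by
    rw [nucNorm]
    rw [Matrix.trace_mul_cycle, Matrix.UnitaryGroup.star_mul_self, one_mul, Matrix.trace_diagonal,
      Fin.sum_univ_two]
    rfl
  rw [hN]
  set x := hB.1.eigenvalues 0
  set y := hB.1.eigenvalues 1
  have hx := Real.sq_sqrt e0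
  have hy := Real.sq_sqrt e1
  have sx := Real.sqrt_nonneg x
  have sy := Real.sqrt_nonneg y
  have hxy : Real.sqrt x * Real.sqrt y = p * r - q * q := by
    have h2 : (Real.sqrt x * Real.sqrt y) ^ 2 = (p * r - q * q) ^ 2 := by
      rw [mul_pow, hx, hy]; linear_combination -D
    exact (pow_left_inj₀ (mul_nonneg sx sy) hd two_ne_zero).mp h2
  have h3 : (Real.sqrt x + Real.sqrt y) ^ 2 = (p + r) ^ 2 := by linear_combination hx + hy + 2 * hxy - T
  exact (pow_left_inj₀ (add_nonneg sx sy) (add_nonneg hp hr) two_ne_zero).mp h3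

lemma euc_norm (x : EuclideanSpace ℝ (Fin 2)) : ‖x‖ = Real.sqrt ((x 0)^2 + (x 1)^2) := by
  rw [EuclideanSpace.norm_eq]
  simp [Fin.sum_univ_two, sq_abs]

lemma euc_apply (A : Matrix (Fin 2) (Fin 2) ℝ) (x : EuclideanSpace ℝ (Fin 2)) (i : Fin 2) :
    (LinearMap.toContinuousLinearMap (Matrix.toEuclideanLin A)) x i
      = A i 0 * x 0 + A i 1 * x 1 := by
  simp [Matrix.toEuclideanLin_apply, Matrix.mulVec, dotProduct, Fin.sum_univ_two]
  fin_cases i <;> simp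

lemma opN2 (a b c d σ : ℝ) (hσ : 0 ≤ σ)
    (hub : ∀ x y : ℝ, (a*x + b*y)^2 + (c*x + d*y)^2 ≤ σ^2*(x^2+y^2))
    (v w : ℝ) (hvw : 0 < v^2+w^2)
    (heq : (a*v + b*w)^2 + (c*v + d*w)^2 = σ^2*(v^2+w^2)) :
    opNorm !![a,b;c,d] = σ := by
  have hA : ∀ x : EuclideanSpace ℝ (Fin 2),
      ‖(LinearMap.toContinuousLinearMap (Matrix.toEuclideanLin !![a,b;c,d])) x‖
        = Real.sqrt ((a * x 0 + b * x 1)^2 + (c * x 0 + d * x 1)^2) := by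
    intro x
    rw [euc_norm]
    rw [euc_apply, euc_apply]
    norm_num [Matrix.cons_val_zero, Matrix.cons_val_one]
  apply ContinuousLinearMap.opNorm_eq_of_bounds hσ
  · intro x
    rw [hA, euc_norm]
    rw [show σ * Real.sqrt ((x 0)^2 + (x 1)^2) = Real.sqrt (σ^2 * ((x 0)^2 + (x 1)^2)) by
      rw [Real.sqrt_mul (sq_nonneg σ), Real.sqrt_sq hσ]]
    exact Real.sqrt_le_sqrt (hub _ _)
  · intro N hN hb
    set xv : EuclideanSpace ℝ (Fin 2) := (WithLp.equiv 2 (Fin 2 → ℝ)).symm ![v, w] with hxv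
    have h0 : xv 0 = v := rfl
    have h1 : xv 1 = w := rfl
    have hbx := hb xv
    rw [hA, euc_norm, h0, h1, heq] at hbx
    rw [Real.sqrt_mul (sq_nonneg σ), Real.sqrt_sq hσ] at hbx
    exact le_of_mul_le_mul_right hbx (Real.sqrt_pos.mpr hvw)

set_option maxHeartbeats 1600000 in
theorem identity_rule_losses_check (l : ℝ) (hl : 0 < l) :
    lossCheckF l (lamCheck l)
      = (if 1 ≤ l then Real.sqrt (2 + 3 / l ^ 2) else Real.sqrt (l ^ 2 + 4)) ∧
    lossCheckO l (lamCheck l)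
      = (if 1 ≤ l then (1 + Real.sqrt (5 + 4 * l ^ 2)) / (2 * l) else 2) ∧
    lossCheckN l (lamCheck l)
      = (if 1 ≤ l then Real.sqrt (4 + 5 / l ^ 2) else l + 2) := by
  have hl0 : l ≠ 0 := ne_of_gt hl
  by_cases hl1 : 1 < l
  · -- hard case
    have hll : (0:ℝ) < l^2 - 1 := by nlinarith
    set u := Real.sqrt (l^2-1) with hudef
    have hu2 : u^2 = l^2-1 := Real.sq_sqrt hll.le
    have hu0 : 0 < u := Real.sqrt_pos.mpr hll
    have hu3 : u^3 = (l^2-1)*u := by rw [pow_succ, hu2]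
    have hu4 : u^4 = (l^2-1)^2 := by rw [show u^4 = (u^2)^2 by ring, hu2]
    have hu5 : u^5 = (l^2-1)^2*u := by rw [show u^5 = (u^2)^2*u by ring, hu2]
    have hu6 : u^6 = (l^2-1)^3 := by rw [show u^6 = (u^2)^3 by ring, hu2]
    set r := Real.sqrt (5+4*l^2) with hrdef
    have hr2 : r^2 = 5+4*l^2 := Real.sq_sqrt (by nlinarith)
    have hr0 : 0 ≤ r := Real.sqrt_nonneg _
    have hr3 : r^3 = (5+4*l^2)*r := by rw [pow_succ, hr2]
    have hr4 : r^4 = (5+4*l^2)^2 := by rw [show r^4 = (r^2)^2 by ring, hr2]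
    set t := Real.sqrt (4 + 5 / l ^ 2) with htdef
    have ht2 : t^2 = 4+5/l^2 := Real.sq_sqrt (by positivity)
    have ht0 : 0 < t := Real.sqrt_pos.mpr (by positivity)
    have ht0' : t ≠ 0 := ne_of_gt ht0
    have ht3 : t^3 = (4+5/l^2)*t := by rw [pow_succ, ht2]
    have ht4 : t^4 = (4+5/l^2)^2 := by rw [show t^4 = (t^2)^2 by ring, ht2]
    have hc : cCheck l = u/l := by
      rw [cCheck, if_pos hl1,
        show (1:ℝ) - 1/l^2 = (u/l)^2 by rw [div_pow, hu2]; field_simp]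
      exact Real.sqrt_sq (div_nonneg hu0.le hl.le)
    have hs : sCheck l = 1/l := by
      rw [sCheck, hc, div_pow, hu2,
        show (1:ℝ) - (l^2-1)/l^2 = (1/l)^2 by field_simp; ring]
      exact Real.sqrt_sq (by positivity)
    have hθ : lamCheck l = l + 1/l := if_pos hl1
    have hM : pivotM l (lamCheck l) (cCheck l) (sCheck l)
        = !![1/l^3, -((l^2+1)*u/l^3); -((l^2+1)*u/l^3), -((l^2+1)/l^3)] := by
      rw [hθ, hc, hs, pivotM]
      ext i j
      fin_cases i <;> fin_cases j <;>
        simp only [Matrix.cons_val', Matrix.cons_val_zero, Matrix.cons_val_one,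
          Matrix.head_cons, Matrix.empty_val', Matrix.cons_val_fin_one, Matrix.head_fin_const,
          Fin.zero_eta, Fin.mk_one, Matrix.of_apply]
      · rw [div_pow, hu2]; field_simp; ring
      · field_simp
      · field_simp
      · field_simp
    have h1le : (1:ℝ) ≤ l := le_of_lt hl1
    rw [if_pos h1le, if_pos h1le, if_pos h1le]
    refine ⟨?_, ?_, ?_⟩
    · -- Frobenius
      rw [lossCheckF, hM, frob2]
      congr 1
      field_simp [hl0, ht0']
      ring_nf
      simp only [hu2, hu3, hu4, hu5, hu6]
      try field_simp [hl0, ht0']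
      ring
    · -- operator norm
      rw [lossCheckO, hM]
      refine opN2 _ _ _ _ _ (by positivity) ?_ ((l^2+1)*u/l^3) (1/l^3 + (1+r)/(2*l)) ?_ ?_
      · intro x y
        have key : ((l^2*(1+r)+2)/(2*l^4)) *
            (((1+r)/(2*l))^2*(x^2+y^2)
              - ((1/l^3*x + (-((l^2+1)*u/l^3))*y)^2
                + ((-((l^2+1)*u/l^3))*x + (-((l^2+1)/l^3))*y)^2))
            = (((l^2*(1+r)+2)/(2*l^4))*x + (-((l^2+1)*u/l^4))*y)^2 := by
          field_simp [hl0, ht0']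
          ring_nf
          simp only [hu2, hu3, hu4, hu5, hu6, hr2, hr3, hr4]
          try field_simp [hl0, ht0']
          ring
        have hp : 0 < (l^2*(1+r)+2)/(2*l^4) := by
          apply div_pos (by nlinarith) (by positivity)
        nlinarith [key, sq_nonneg (((l^2*(1+r)+2)/(2*l^4))*x + (-((l^2+1)*u/l^4))*y), hp]
      · have hv : 0 < (l^2+1)*u/l^3 := div_pos (mul_pos (by nlinarith) hu0) (by positivity)
        nlinarith [pow_pos hv 2, sq_nonneg (1/l^3 + (1+r)/(2*l))]
      · have h1 : 1/l^3*((l^2+1)*u/l^3) + (-((l^2+1)*u/l^3))*(1/l^3 + (1+r)/(2*l))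
            = (-((1+r)/(2*l)))*((l^2+1)*u/l^3) := by ring
        have h2 : (-((l^2+1)*u/l^3))*((l^2+1)*u/l^3) + (-((l^2+1)/l^3))*(1/l^3 + (1+r)/(2*l))
            = (-((1+r)/(2*l)))*(1/l^3 + (1+r)/(2*l)) := by
          field_simp [hl0, ht0']
          ring_nf
          simp only [hu2, hu3, hu4, hu5, hu6, hr2, hr3, hr4]
          try field_simp [hl0, ht0']
          ring
        rw [h1, h2]
        ring
    · -- nuclear norm
      rw [lossCheckN, hM]
      have hdet : (((1+(l^2+1)^2*(l^2-1))/l^6 + (l^2+1)/l^2)/t)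
            * (((l^2+1)^2/l^4 + (l^2+1)/l^2)/t)
            - (((l^2+1)*u/l^4)/t)^2 = (l^2+1)/l^2 := by
        field_simp [hl0, ht0']
        ring_nf
        simp only [hu2, hu3, hu4, hu5, hu6, ht2, ht3, ht4]
        try field_simp [hl0, ht0']
        ring
      have htr : ((1+(l^2+1)^2*(l^2-1))/l^6 + (l^2+1)/l^2)/t
            + ((l^2+1)^2/l^4 + (l^2+1)/l^2)/t = t := by
        field_simp [hl0, ht0']
        ring_nf
        simp only [hu2, hu3, hu4, hu5, hu6, ht2, ht3, ht4]
        try field_simp [hl0, ht0']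
        ring
      rw [← htr]
      refine nuc2 _ _ _ _ (((l^2+1)*u/l^4)/t) _ ?_ ?_
      · apply psd2
        · apply div_nonneg _ ht0.le
          have : (0:ℝ) ≤ (1+(l^2+1)^2*(l^2-1))/l^6 := by
            apply div_nonneg (by nlinarith) (by positivity)
          have h2 : (0:ℝ) ≤ (l^2+1)/l^2 := by positivity
          linarith
        · apply div_nonneg _ ht0.le
          positivity
        · have hpos : (0:ℝ) < (l^2+1)/l^2 := by positivity
          nlinarith [hdet]
      · ext i j
        rw [pow_two]
        fin_cases i <;> fin_cases j <;>
          simp only [Matrix.mul_apply, Fin.sum_univ_two, Matrix.conjTranspose_apply,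
            Matrix.cons_val', Matrix.cons_val_zero, Matrix.cons_val_one,
            Matrix.head_cons, Matrix.empty_val', Matrix.cons_val_fin_one,
            Matrix.head_fin_const, star_trivial, Fin.zero_eta, Fin.mk_one, Matrix.of_apply] <;>
          (field_simp; ring_nf;
           simp only [hu2, hu3, hu4, hu5, hu6, ht2, ht3, ht4]; (try field_simp [hl0, ht0']); ring)
  · -- easy case : 0 < l ≤ 1
    have hle : l ≤ 1 := not_lt.mp hl1
    have hc : cCheck l = 0 := if_neg hl1
    have hs : sCheck l = 1 := by rw [sCheck, hc]; norm_num
    have hθ : lamCheck l = 2 := if_neg hl1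
    have hM : pivotM l (lamCheck l) (cCheck l) (sCheck l) = !![l, 0; 0, -2] := by
      rw [hθ, hc, hs, pivotM]; norm_num
    have hF : lossCheckF l (lamCheck l) = Real.sqrt (l^2+4) := by
      rw [lossCheckF, hM, frob2]; norm_num
    have hO : lossCheckO l (lamCheck l) = 2 := by
      rw [lossCheckO, hM]
      refine opN2 _ _ _ _ _ (by norm_num) ?_ 0 1 ?_ ?_
      · intro x y
        nlinarith [mul_nonneg (sub_nonneg.mpr hle) (by linarith : (0:ℝ) ≤ 1 + l),
          sq_nonneg x, sq_nonneg y]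
      · norm_num
      · norm_num
    have hN : lossCheckN l (lamCheck l) = l + 2 := by
      rw [lossCheckN, hM]
      refine nuc2 l 0 (-2) l 0 2 (psd2 l 0 2 hl.le (by norm_num) (by nlinarith)) ?_
      · ext i j
        rw [pow_two]
        fin_cases i <;> fin_cases j <;>
          simp [Matrix.mul_apply, Fin.sum_univ_two, Matrix.conjTranspose_apply,
            Matrix.vecHead, Matrix.vecTail]
    rw [hF, hO, hN]
    by_cases h1 : 1 ≤ l
    · have hl1' : l = 1 := le_antisymm hle h1
      subst hl1'
      rw [if_pos h1, if_pos h1, if_pos h1]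
      have h9 : Real.sqrt 9 = 3 := by
        rw [show (9:ℝ) = 3^2 by norm_num, Real.sqrt_sq (by norm_num)]
      norm_num [h9]
    · rw [if_neg h1, if_neg h1, if_neg h1]
      exact ⟨rfl, rfl, rfl⟩
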